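/- arXiv:1701.09065 — 3 statements merged into one kernel-verified Lean document; each statement's English description precedes it below -/
import Mathlib

section
/- Let $U:\mathbb{T}\to\mathbb{R}$ be continuous with $U(z)=U(\pi-z)$ for all $z$, let $\rho > 0$, and define $\xi(a) = \int_{-\pi}^{\pi} (\cos(z) - a) e^{-U(z) + \rho a \cos(z)} dz$ for $a \in \mathbb{R}$. Then $\xi$ admits the power series expansion $\xi(a) = \sum_{n \geq 0} \frac{a^{2n+1} \rho^{2n}}{(2n)!} I(2n) \left( \frac{\rho I(2n+2)}{(2n+1) I(2n)} - 1 \right)$, where $I(k) = \int_{-\pi}^{\pi} \cos^k(z) e^{-U(z)} dz$; in particular $\xi$ is an odd function of $a$. -/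
/-
Expand `exp (ρ a cos z)` in its exponential series and integrate term by term, by dominated
convergence: the series of absolute values sums to `exp |ρ a cos z|` times a continuous function.
The reflection `z ↦ π - z` maps `cos` to `-cos` and, by the symmetry and `2π`-periodicity of `U`,
preserves `∫_{-π}^{π} e^{-U}`; hence every odd moment `I(2n+1)` vanishes. What survives is
`(ρa)^{2n+1} / (2n+1)! * I(2n+2) - a (ρa)^{2n} / (2n)! * I(2n)`, and since `I(2n) > 0` this can be
written in the stated form; each term is odd in `a`.
-/

open Real MeasureTheory

theorem Real.hasSum_pow_div_factorial_exp (x : ℝ) :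
    HasSum (fun n : ℕ => x ^ n / n.factorial) (exp x) :=
  Real.exp_eq_exp_ℝ ▸ NormedSpace.expSeries_div_hasSum_exp x

theorem hasSum_intervalIntegral_exp_mul {f g : ℝ → ℝ} (hf : Continuous f) (hg : Continuous g)
    (c a b : ℝ) :
    HasSum (fun n : ℕ => c ^ n / n.factorial * ∫ z in a..b, f z ^ n * g z)
      (∫ z in a..b, exp (c * f z) * g z) := by
  have hbound_sum : (fun z => ∑' n : ℕ, |c * f z| ^ n / n.factorial * |g z|)
      = fun z => exp |c * f z| * |g z| :=
    funext fun z => ((Real.hasSum_pow_div_factorial_exp _).mul_right _).tsum_eq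
  have hsum := intervalIntegral.hasSum_integral_of_dominated_convergence (μ := volume) (a := a)
    (b := b) (F := fun (n : ℕ) z => (c * f z) ^ n / n.factorial * g z)
    (fun n z => |c * f z| ^ n / n.factorial * |g z|)
    (fun n => by fun_prop)
    (fun n => Filter.Eventually.of_forall fun z _ => by simp [abs_mul])
    (Filter.Eventually.of_forall fun z _ =>
      ((Real.hasSum_pow_div_factorial_exp _).mul_right _).summable)
    (by rw [hbound_sum]; exact (by fun_prop : Continuous _).intervalIntegrable _ _)
    (Filter.Eventually.of_forall fun z _ =>
      (Real.hasSum_pow_div_factorial_exp _).mul_right _)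
  have hterm : ∀ n : ℕ, ∫ z in a..b, (c * f z) ^ n / n.factorial * g z
      = c ^ n / n.factorial * ∫ z in a..b, f z ^ n * g z := fun n => by
    rw [← intervalIntegral.integral_const_mul]
    congr 1 with z
    ring
  simpa only [hterm] using hsum

theorem Function.Periodic.intervalIntegral_eq_zero_of_antisymm {f : ℝ → ℝ} {T : ℝ}
    (hf : Function.Periodic f T) (s : ℝ) (h : ∀ z, f (s - z) = -f z) (t : ℝ) :
    ∫ z in t..t + T, f z = 0 := by
  have hreflect : ∫ z in t..t + T, f z = -∫ z in t..t + T, f z :=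
    calc ∫ z in t..t + T, f z
        = ∫ z in (s - t - T)..(s - t - T) + T, f z := hf.intervalIntegral_add_eq _ _
      _ = ∫ z in t..t + T, f (s - z) := by
        rw [intervalIntegral.integral_comp_sub_left]; ring_nf
      _ = -∫ z in t..t + T, f z := by simp only [h, intervalIntegral.integral_neg]
  linarith

-- `I(k)` in the paper's notation.
noncomputable def cosMoment (U : ℝ → ℝ) (k : ℕ) : ℝ :=
  ∫ z in (-π)..π, cos z ^ k * exp (-U z)

theorem cosMoment_eq_zero_of_odd {U : ℝ → ℝ} (hper : Function.Periodic U (2 * π))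
    (hsym : ∀ z, U z = U (π - z)) {k : ℕ} (hk : Odd k) : cosMoment U k = 0 := by
  have hperiodic : Function.Periodic (fun z => cos z ^ k * exp (-U z)) (2 * π) := fun z => by
    simp only [cos_add_two_pi, hper z]
  have := hperiodic.intervalIntegral_eq_zero_of_antisymm π
    (fun z => by simp only [cos_pi_sub, hk.neg_pow, ← hsym z, neg_mul]) (-π)
  rwa [show -π + 2 * π = π by ring] at this

theorem cosMoment_pos_of_even {U : ℝ → ℝ} (hU : Continuous U) {k : ℕ} (hk : Even k) :
    0 < cosMoment U k :=
  intervalIntegral.integral_pos (by linarith [pi_pos]) (by fun_prop)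
    (fun z _ => mul_nonneg (hk.pow_nonneg _) (exp_pos _).le)
    ⟨0, ⟨by linarith [pi_pos], pi_pos.le⟩, by simp [exp_pos]⟩

theorem hasSum_comp_two_mul_iff {M : Type*} [AddCommMonoid M] [TopologicalSpace M]
    {f : ℕ → M} {s : M} (hf : ∀ k, f (2 * k + 1) = 0) :
    HasSum (fun k => f (2 * k)) s ↔ HasSum f s :=
  (mul_right_injective₀ two_ne_zero).hasSum_iff fun n hn => by
    obtain ⟨k, rfl | rfl⟩ := n.even_or_odd'
    · exact absurd ⟨k, rfl⟩ hn
    · exact hf k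

theorem hasSum_comp_two_mul_add_one_iff {M : Type*} [AddCommMonoid M] [TopologicalSpace M]
    {f : ℕ → M} {s : M} (hf : ∀ k, f (2 * k) = 0) :
    HasSum (fun k => f (2 * k + 1)) s ↔ HasSum f s :=
  Function.Injective.hasSum_iff (g := fun k => 2 * k + 1) (fun x y h => by simpa using h)
    fun n hn => by
      obtain ⟨k, rfl | rfl⟩ := n.even_or_odd'
      · exact hf k
      · exact absurd ⟨k, rfl⟩ hn

section Moments

variable {U : ℝ → ℝ}

theorem hasSum_cosMoment_even (hU : Continuous U) (hper : Function.Periodic U (2 * π))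
    (hsym : ∀ z, U z = U (π - z)) (x : ℝ) :
    HasSum (fun k : ℕ => x ^ (2 * k) / (2 * k).factorial * cosMoment U (2 * k))
      (∫ z in (-π)..π, exp (x * cos z) * exp (-U z)) := by
  refine (hasSum_comp_two_mul_iff fun k => ?_).2
    (hasSum_intervalIntegral_exp_mul continuous_cos (by fun_prop) x (-π) π)
  exact mul_eq_zero_of_right _ (cosMoment_eq_zero_of_odd hper hsym ⟨k, rfl⟩)

theorem hasSum_cosMoment_odd (hU : Continuous U) (hper : Function.Periodic U (2 * π))
    (hsym : ∀ z, U z = U (π - z)) (x : ℝ) :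
    HasSum (fun k : ℕ => x ^ (2 * k + 1) / (2 * k + 1).factorial * cosMoment U (2 * k + 2))
      (∫ z in (-π)..π, exp (x * cos z) * (cos z * exp (-U z))) := by
  have hshift : ∀ n : ℕ, ∫ z in (-π)..π, cos z ^ n * (cos z * exp (-U z)) = cosMoment U (n + 1) :=
    fun n => by simp only [cosMoment, pow_succ, mul_assoc]
  have hsum := hasSum_intervalIntegral_exp_mul continuous_cos
    (g := fun z => cos z * exp (-U z)) (by fun_prop) x (-π) π
  simp only [hshift] at hsum
  refine (hasSum_comp_two_mul_add_one_iff fun k => ?_).2 hsum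
  exact mul_eq_zero_of_right _ (cosMoment_eq_zero_of_odd hper hsym ⟨k, rfl⟩)

theorem hasSum_integral_cos_sub_mul_exp (hU : Continuous U) (hper : Function.Periodic U (2 * π))
    (hsym : ∀ z, U z = U (π - z)) (ρ a : ℝ) :
    HasSum (fun n : ℕ => a ^ (2 * n + 1) * ρ ^ (2 * n) / (2 * n).factorial * cosMoment U (2 * n)
        * (ρ * cosMoment U (2 * n + 2) / ((2 * (n : ℝ) + 1) * cosMoment U (2 * n)) - 1))
      (∫ z in (-π)..π, (cos z - a) * exp (-U z + ρ * a * cos z)) := by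
  have hsplit : ∫ z in (-π)..π, (cos z - a) * exp (-U z + ρ * a * cos z)
      = (∫ z in (-π)..π, exp (ρ * a * cos z) * (cos z * exp (-U z)))
        - a * ∫ z in (-π)..π, exp (ρ * a * cos z) * exp (-U z) := by
    have hcont : Continuous fun z => exp (ρ * a * cos z) * (cos z * exp (-U z)) := by fun_prop
    have hcont' : Continuous fun z => a * (exp (ρ * a * cos z) * exp (-U z)) := by fun_prop
    rw [← intervalIntegral.integral_const_mul, ← intervalIntegral.integral_sub
      (hcont.intervalIntegrable _ _) (hcont'.intervalIntegrable _ _)]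
    congr 1 with z
    rw [exp_add]
    ring
  have hterm : ∀ n : ℕ, (ρ * a) ^ (2 * n + 1) / (2 * n + 1).factorial * cosMoment U (2 * n + 2)
      - a * ((ρ * a) ^ (2 * n) / (2 * n).factorial * cosMoment U (2 * n))
      = a ^ (2 * n + 1) * ρ ^ (2 * n) / (2 * n).factorial * cosMoment U (2 * n)
        * (ρ * cosMoment U (2 * n + 2) / ((2 * (n : ℝ) + 1) * cosMoment U (2 * n)) - 1) := by
    intro n
    have hI : cosMoment U (2 * n) ≠ 0 := (cosMoment_pos_of_even hU ⟨n, two_mul n⟩).ne'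
    rw [Nat.factorial_succ]
    push_cast
    field_simp
    ring
  rw [hsplit]
  simpa only [hterm] using
    (hasSum_cosMoment_odd hU hper hsym (ρ * a)).sub
      ((hasSum_cosMoment_even hU hper hsym (ρ * a)).mul_left a)

end Moments

theorem stmt6_general (U : ℝ → ℝ) (hU : Continuous U) (hper : Function.Periodic U (2 * π))
    (hsym : ∀ z, U z = U (π - z)) (ρ : ℝ) :
    (∀ a : ℝ,
      (∫ z in (-π)..π, (cos z - a) * exp (-U z + ρ * a * cos z)) =
      ∑' n : ℕ, (a ^ (2 * n + 1) * ρ ^ (2 * n) / (Nat.factorial (2 * n) : ℝ))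
        * (∫ z in (-π)..π, cos z ^ (2 * n) * exp (-U z))
        * (ρ * (∫ z in (-π)..π, cos z ^ (2 * n + 2) * exp (-U z))
            / ((2 * (n : ℝ) + 1) * ∫ z in (-π)..π, cos z ^ (2 * n) * exp (-U z)) - 1)) ∧
    (∀ a : ℝ,
      (∫ z in (-π)..π, (cos z - (-a)) * exp (-U z + ρ * (-a) * cos z))
        = -∫ z in (-π)..π, (cos z - a) * exp (-U z + ρ * a * cos z)) := by
  have hxi := hasSum_integral_cos_sub_mul_exp hU hper hsym ρ
  refine ⟨fun a => (hxi a).tsum_eq.symm, fun a => (hxi (-a)).unique ?_⟩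
  have hodd : ∀ n : ℕ, (-a) ^ (2 * n + 1) = -a ^ (2 * n + 1) := fun n => Odd.neg_pow ⟨n, rfl⟩ a
  simpa only [hodd, neg_mul, neg_div] using (hxi a).neg

/-- Power series expansion of `ξ(a) = ∫ (cos z - a) e^{-U(z) + ρ a cos z} dz` for a
symmetric potential `U`, in terms of the even moments `I(2n) = ∫ cos^{2n} e^{-U}`;
in particular `ξ` is an odd function of `a`. -/
theorem stmt6 (U : ℝ → ℝ) (hU : Continuous U) (hper : Function.Periodic U (2 * π))
    (hsym : ∀ z, U z = U (π - z)) (ρ : ℝ) (hρ : 0 < ρ) :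
    (∀ a : ℝ,
      (∫ z in (-π)..π, (cos z - a) * exp (-U z + ρ * a * cos z)) =
      ∑' n : ℕ, (a ^ (2 * n + 1) * ρ ^ (2 * n) / (Nat.factorial (2 * n) : ℝ))
        * (∫ z in (-π)..π, cos z ^ (2 * n) * exp (-U z))
        * (ρ * (∫ z in (-π)..π, cos z ^ (2 * n + 2) * exp (-U z))
            / ((2 * (n : ℝ) + 1) * ∫ z in (-π)..π, cos z ^ (2 * n) * exp (-U z)) - 1)) ∧
    (∀ a : ℝ,
      (∫ z in (-π)..π, (cos z - (-a)) * exp (-U z + ρ * (-a) * cos z))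
        = -∫ z in (-π)..π, (cos z - a) * exp (-U z + ρ * a * cos z)) :=
  stmt6_general U hU hper hsym ρ
end

section
/- Let $U(z) = -\cos(2z)$ on $\mathbb{T}$, $\rho > 0$, $r \geq 0$, $\theta \in (-\pi, \pi]$, and suppose $0 = \int_{-\pi}^{\pi} \sin(z - \theta) \exp\left(\cos(2z) + \rho r \cos(z - \theta)\right) dz$. Then either $r = 0$ or $\theta \equiv 0 \pmod{\pi/2}$. -/
open Real MeasureTheory

/-- For the potential `U(z) = -cos(2z)`, if the fixed-point equation
`0 = ∫ sin(z-θ) exp(cos(2z) + ρ r cos(z-θ)) dz` holds, then either `r = 0` or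
`θ ≡ 0 (mod π/2)`. -/
theorem stmt8 (ρ r θ : ℝ) (hρ : 0 < ρ) (hr : 0 ≤ r) (hθ : θ ∈ Set.Ioc (-π) π)
    (h : 0 = ∫ z in (-π)..π, sin (z - θ) * exp (cos (2 * z) + ρ * r * cos (z - θ))) :
    r = 0 ∨ ∃ k : ℤ, θ = k * (π / 2) := by
  by_cases hsin : sin (2 * θ) = 0
  · right
    rw [Real.sin_eq_zero_iff] at hsin
    obtain ⟨n, hn⟩ := hsin
    exact ⟨n, by linarith⟩
  · left
    by_contra hr0
    have hrpos : 0 < r := lt_of_le_of_ne hr (Ne.symm hr0)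
    set F : ℝ → ℝ := fun z => sin (z - θ) * exp (cos (2 * z) + ρ * r * cos (z - θ)) with hF
    set G : ℝ → ℝ := fun x => sin x * exp (cos (2 * x + 2 * θ) + ρ * r * cos x) with hG
    have hFG : ∀ x, F (x + θ) = G x := by
      intro x
      simp only [hF, hG]
      rw [show x + θ - θ = x by ring, show 2 * (x + θ) = 2 * x + 2 * θ by ring]
    have hFcont : Continuous F := by fun_prop
    have hGcont : Continuous G := by fun_prop
    -- periodicity
    have hper : Function.Periodic F (2 * π) := by
      intro x
      simp only [hF]
      rw [show x + 2 * π - θ = (x - θ) + 2 * π by ring, Real.sin_add_two_pi,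
        show 2 * (x + 2 * π) = (2 * x + 2 * π) + 2 * π by ring, Real.cos_add_two_pi,
        Real.cos_add_two_pi, Real.cos_add_two_pi]
    have hA := hper.intervalIntegral_add_eq (-π) (-π + θ)
    simp only [show -π + 2 * π = π by ring, show -π + θ + 2 * π = π + θ by ring] at hA
    have hB : (∫ x in (-π)..π, G x) = ∫ x in (-π + θ)..(π + θ), F x := by
      rw [← intervalIntegral.integral_comp_add_right F θ]
      exact intervalIntegral.integral_congr (fun x _ => (hFG x).symm)
    have hG0 : (0 : ℝ) = ∫ x in (-π)..π, G x := by
      rw [hB, ← hA]; exact h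
    -- fold z ↔ -z
    set H : ℝ → ℝ := fun x => G x + G (-x) with hH
    have hHcont : Continuous H := by fun_prop
    have hC : (∫ x in (-π)..π, G x) = ∫ x in (0:ℝ)..π, H x := by
      have h1 : (∫ x in (-π)..(0:ℝ), G x) = ∫ x in (0:ℝ)..π, G (-x) := by
        rw [intervalIntegral.integral_comp_neg G]
        norm_num
      rw [← intervalIntegral.integral_add_adjacent_intervals
        (hGcont.intervalIntegrable (-π) 0) (hGcont.intervalIntegrable 0 π), h1,
        ← intervalIntegral.integral_add
          (Continuous.intervalIntegrable (by fun_prop : Continuous fun x => G (-x)) 0 π)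
          (hGcont.intervalIntegrable 0 π)]
      simp only [hH]
      exact intervalIntegral.integral_congr (fun x _ => by ring)
    -- fold x ↔ π - x
    set K : ℝ → ℝ := fun x => H x + H (π - x) with hK
    have hD : (∫ x in (0:ℝ)..π, H x) = ∫ x in (0:ℝ)..(π/2), K x := by
      have h1 : (∫ x in (π/2)..π, H x) = ∫ x in (0:ℝ)..(π/2), H (π - x) := by
        rw [intervalIntegral.integral_comp_sub_left H π, show π - π/2 = π/2 by ring,
          show π - (0:ℝ) = π by ring]
      rw [← intervalIntegral.integral_add_adjacent_intervals
        (hHcont.intervalIntegrable 0 (π/2)) (hHcont.intervalIntegrable (π/2) π), h1,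
        ← intervalIntegral.integral_add (hHcont.intervalIntegrable 0 (π/2))
          (Continuous.intervalIntegrable (by fun_prop : Continuous fun x => H (π - x)) 0 (π/2))]
    -- key algebraic identity
    have key : ∀ x, K x =
        sin x * (exp (cos (2 * x + 2 * θ)) - exp (cos (2 * x - 2 * θ))) *
          (exp (ρ * r * cos x) - exp (-(ρ * r * cos x))) := by
      intro x
      simp only [hK, hH, hG]
      rw [show (-(π - x) : ℝ) = x - π by ring,
        show 2 * (-x) + 2 * θ = -(2 * x - 2 * θ) by ring,
        show 2 * (π - x) + 2 * θ = -(2 * x - 2 * θ) + 2 * π by ring,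
        show 2 * (x - π) + 2 * θ = (2 * x + 2 * θ) - 2 * π by ring,
        Real.cos_add_two_pi, Real.cos_sub_two_pi, Real.cos_neg, Real.sin_neg, Real.cos_neg,
        Real.sin_pi_sub, Real.cos_pi_sub, Real.sin_sub_pi, Real.cos_sub_pi]
      rw [show cos (2 * x - 2 * θ) + ρ * r * -cos x = cos (2 * x - 2 * θ) + -(ρ * r * cos x)
          by ring,
        show cos (2 * x + 2 * θ) + ρ * r * -cos x = cos (2 * x + 2 * θ) + -(ρ * r * cos x)
          by ring,
        exp_add, exp_add, exp_add, exp_add]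
      ring
    -- sign of the integrand
    have hpos : ∀ x ∈ Set.Ioo (0 : ℝ) (π / 2), 0 < -(sin (2 * θ)) * K x := by
      intro x hx
      have hpi := pi_pos
      have hsx : 0 < sin x := sin_pos_of_pos_of_lt_pi hx.1 (by linarith [hx.2])
      have hcx : 0 < cos x := cos_pos_of_mem_Ioo ⟨by linarith [hx.1], hx.2⟩
      have hBpos : 0 < ρ * r * cos x := by positivity
      have hExp : 0 < exp (ρ * r * cos x) - exp (-(ρ * r * cos x)) := by
        have := exp_lt_exp.mpr (show -(ρ * r * cos x) < ρ * r * cos x by linarith)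
        linarith
      have hs2x : 0 < sin (2 * x) := sin_pos_of_pos_of_lt_pi (by linarith [hx.1])
        (by linarith [hx.2])
      have hdiff : cos (2 * x + 2 * θ) - cos (2 * x - 2 * θ) = -(2 * sin (2 * x) * sin (2 * θ)) := by
        rw [Real.cos_add, Real.cos_sub]; ring
      rw [key]
      rcases lt_or_gt_of_ne hsin with hneg | hposθ
      · have hlt : cos (2 * x - 2 * θ) < cos (2 * x + 2 * θ) := by nlinarith
        have := exp_lt_exp.mpr hlt
        have h2 : 0 < exp (cos (2 * x + 2 * θ)) - exp (cos (2 * x - 2 * θ)) := by linarith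
        have : 0 < sin x * (exp (cos (2 * x + 2 * θ)) - exp (cos (2 * x - 2 * θ))) *
            (exp (ρ * r * cos x) - exp (-(ρ * r * cos x))) := by positivity
        nlinarith
      · have hlt : cos (2 * x + 2 * θ) < cos (2 * x - 2 * θ) := by nlinarith
        have := exp_lt_exp.mpr hlt
        have h2 : 0 < exp (cos (2 * x - 2 * θ)) - exp (cos (2 * x + 2 * θ)) := by linarith
        nlinarith [mul_pos (mul_pos hsx h2) hExp, mul_pos hposθ
          (mul_pos (mul_pos hsx h2) hExp)]
    have hKcont : Continuous K := by fun_prop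
    have hint : 0 < ∫ x in (0:ℝ)..(π/2), -(sin (2 * θ)) * K x := by
      apply intervalIntegral.intervalIntegral_pos_of_pos_on
      · exact (continuous_const.mul hKcont).intervalIntegrable 0 (π/2)
      · exact hpos
      · linarith [pi_pos]
    rw [intervalIntegral.integral_const_mul, ← hD, ← hC, ← hG0, mul_zero] at hint
    exact lt_irrefl 0 hint
end

section
/- As $\rho \to \infty$ with $b \to 1$, the ratio $h(\rho, b) = \frac{\int_{-\pi}^{\pi} \cos^2(z) e^{\cos(2z) + \rho b \sin(z)} dz}{\int_{-\pi}^{\pi} e^{\cos(2z) + \rho b \sin(z)} dz}$ satisfies $\rho \, h(\rho, b) \to 1$; more precisely $h(\rho, b) \sim \frac{1}{\rho b - 4}$ as $\rho b \to \infty$ with $b$ bounded away from $0$. -/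
/-!
Integrating the derivative of `cos z · e^{cos 2z + s sin z}` over a period gives the exact
identity `(s - 4) N - A = -(E₁ + 4 E₂)`, where `A`, `N`, `E₁`, `E₂` are the integrals of the
weight `e^{cos 2z + s sin z}` against `1`, `cos² z`, `1 - sin z` and `(1 - sin z) cos² z`.
Since `0 ≤ E₂ ≤ E₁`, it remains to see that `E₁ / A → 0`: the weight concentrates at
`z = π/2`, where `1 - sin z` vanishes. Splitting according to `sin z ≥ 1 - δ` bounds `E₁` by
`δ A + O(e^{s (1 - δ)})`, while the window `|z - π/2| ≤ δ` gives
`A ≥ 2δ e^{s (1 - δ/2) - 1}`.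
-/

open Real MeasureTheory Filter Topology

noncomputable def hRatio (ρ b : ℝ) : ℝ :=
  (∫ z in (-π)..π, cos z ^ 2 * exp (cos (2 * z) + ρ * b * sin z)) /
    ∫ z in (-π)..π, exp (cos (2 * z) + ρ * b * sin z)

noncomputable def tiltedIntegral (g f : ℝ → ℝ) (s : ℝ) : ℝ :=
  ∫ z in (-π)..π, f z * exp (g z + s * sin z)

section Linearity

variable {g f f' : ℝ → ℝ} {s : ℝ}

lemma intervalIntegrable_tilted (hg : Continuous g) (hf : Continuous f) (s : ℝ) :
    IntervalIntegrable (fun z => f z * exp (g z + s * sin z)) volume (-π) π :=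
  (by fun_prop : Continuous _).intervalIntegrable _ _

lemma tiltedIntegral_add (hg : Continuous g) (hf : Continuous f) (hf' : Continuous f') :
    tiltedIntegral g (f + f') s = tiltedIntegral g f s + tiltedIntegral g f' s := by
  simp only [tiltedIntegral, Pi.add_apply, add_mul]
  exact intervalIntegral.integral_add (intervalIntegrable_tilted hg hf s)
    (intervalIntegrable_tilted hg hf' s)

lemma tiltedIntegral_sub (hg : Continuous g) (hf : Continuous f) (hf' : Continuous f') :
    tiltedIntegral g (f - f') s = tiltedIntegral g f s - tiltedIntegral g f' s := by
  simp only [tiltedIntegral, Pi.sub_apply, sub_mul]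
  exact intervalIntegral.integral_sub (intervalIntegrable_tilted hg hf s)
    (intervalIntegrable_tilted hg hf' s)

lemma tiltedIntegral_const_mul (c : ℝ) :
    tiltedIntegral g (fun z => c * f z) s = c * tiltedIntegral g f s := by
  simp only [tiltedIntegral, mul_assoc]
  exact intervalIntegral.integral_const_mul c _

lemma tiltedIntegral_mono (hg : Continuous g) (hf : Continuous f) (hf' : Continuous f')
    (h : ∀ z, f z ≤ f' z) : tiltedIntegral g f s ≤ tiltedIntegral g f' s :=
  intervalIntegral.integral_mono_on (by linarith [pi_pos]) (intervalIntegrable_tilted hg hf s)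
    (intervalIntegrable_tilted hg hf' s) fun z _ => mul_le_mul_of_nonneg_right (h z) (exp_pos _).le

lemma tiltedIntegral_nonneg (h : ∀ z, 0 ≤ f z) : 0 ≤ tiltedIntegral g f s :=
  intervalIntegral.integral_nonneg (by linarith [pi_pos]) fun z _ =>
    mul_nonneg (h z) (exp_pos _).le

lemma tiltedIntegral_one_pos (hg : Continuous g) (s : ℝ) : 0 < tiltedIntegral g 1 s :=
  intervalIntegral.intervalIntegral_pos_of_pos (intervalIntegrable_tilted hg continuous_const s)
    (fun z => by simp [exp_pos]) (by linarith [pi_pos])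

end Linearity

section Concentration

variable {g : ℝ → ℝ} {C s δ : ℝ}

lemma tiltedIntegral_one_sub_sin_le (hg : Continuous g) (hC : ∀ z, g z ≤ C) (hs : 0 ≤ s)
    (hδ : 0 ≤ δ) :
    tiltedIntegral g (1 - sin) s ≤ δ * tiltedIntegral g 1 s + 4 * π * exp (C + s * (1 - δ)) := by
  have hbound : ∀ z, (1 - sin z) * exp (g z + s * sin z)
      ≤ δ * (1 * exp (g z + s * sin z)) + 2 * exp (C + s * (1 - δ)) := by
    intro z
    have hw := exp_pos (g z + s * sin z)
    have he := exp_pos (C + s * (1 - δ))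
    rcases le_or_gt (1 - δ) (sin z) with hnear | hfar
    · nlinarith
    · have hw_le : exp (g z + s * sin z) ≤ exp (C + s * (1 - δ)) :=
        exp_le_exp.2 (by nlinarith [hC z])
      nlinarith [neg_one_le_sin z, sin_le_one z]
  calc tiltedIntegral g (1 - sin) s
      ≤ ∫ z in (-π)..π, (δ * (1 * exp (g z + s * sin z)) + 2 * exp (C + s * (1 - δ))) :=
        intervalIntegral.integral_mono_on (by linarith [pi_pos])
          (intervalIntegrable_tilted hg (by fun_prop) s)
          (by apply Continuous.intervalIntegrable; fun_prop) fun z _ => hbound z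
    _ = δ * tiltedIntegral g 1 s + 4 * π * exp (C + s * (1 - δ)) := by
        rw [intervalIntegral.integral_add
            ((intervalIntegrable_tilted hg continuous_const s).const_mul δ) intervalIntegrable_const,
          intervalIntegral.integral_const_mul, intervalIntegral.integral_const, smul_eq_mul]
        simp only [tiltedIntegral, Pi.one_apply]
        ring

lemma le_tiltedIntegral_one (hg : Continuous g) (hC : ∀ z, -C ≤ g z) (hs : 0 ≤ s)
    (hδ₀ : 0 < δ) (hδ₁ : δ ≤ 1) :
    2 * δ * exp (-C + s * (1 - δ / 2)) ≤ tiltedIntegral g 1 s := by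
  have hπ : 3 ≤ π := pi_gt_three.le
  have hwindow : ∀ z ∈ Set.Icc (π / 2 - δ) (π / 2 + δ),
      exp (-C + s * (1 - δ / 2)) ≤ 1 * exp (g z + s * sin z) := by
    intro z hz
    rw [Set.mem_Icc] at hz
    have hcos : 1 - (z - π / 2) ^ 2 / 2 ≤ sin z := by
      simpa [cos_sub_pi_div_two] using one_sub_sq_div_two_le_cos (x := z - π / 2)
    have hsin : 1 - δ / 2 ≤ sin z := by nlinarith
    rw [one_mul]
    exact exp_le_exp.2 (by nlinarith [hC z])
  calc 2 * δ * exp (-C + s * (1 - δ / 2))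
      = ∫ _ in (π / 2 - δ)..(π / 2 + δ), exp (-C + s * (1 - δ / 2)) := by
        rw [intervalIntegral.integral_const, smul_eq_mul]; ring
    _ ≤ ∫ z in (π / 2 - δ)..(π / 2 + δ), 1 * exp (g z + s * sin z) :=
        intervalIntegral.integral_mono_on (by linarith) intervalIntegrable_const
          (by apply Continuous.intervalIntegrable; fun_prop) hwindow
    _ ≤ tiltedIntegral g 1 s :=
        intervalIntegral.integral_mono_interval (by linarith) (by linarith) (by linarith)
          (Eventually.of_forall fun z => by positivity)
          (intervalIntegrable_tilted hg continuous_const s)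

lemma tiltedIntegral_one_sub_sin_div_le (hg : Continuous g) (hC : ∀ z, |g z| ≤ C) (hs : 0 ≤ s)
    (hδ₀ : 0 < δ) (hδ₁ : δ ≤ 1) :
    tiltedIntegral g (1 - sin) s / tiltedIntegral g 1 s
      ≤ δ + 2 * π / δ * exp (2 * C - s * (δ / 2)) := by
  have hA := tiltedIntegral_one_pos hg s
  have hlow := le_tiltedIntegral_one hg (fun z => (abs_le.1 (hC z)).1) hs hδ₀ hδ₁
  calc tiltedIntegral g (1 - sin) s / tiltedIntegral g 1 s
      ≤ (δ * tiltedIntegral g 1 s + 4 * π * exp (C + s * (1 - δ))) / tiltedIntegral g 1 s := by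
        gcongr
        exact tiltedIntegral_one_sub_sin_le hg (fun z => (abs_le.1 (hC z)).2) hs hδ₀.le
    _ = δ + 4 * π * exp (C + s * (1 - δ)) / tiltedIntegral g 1 s := by
        field_simp
    _ ≤ δ + 4 * π * exp (C + s * (1 - δ)) / (2 * δ * exp (-C + s * (1 - δ / 2))) := by
        gcongr
    _ = δ + 2 * π / δ * exp (2 * C - s * (δ / 2)) := by
        rw [show 2 * C - s * (δ / 2) = (C + s * (1 - δ)) - (-C + s * (1 - δ / 2)) by ring,
          exp_sub]
        field_simp
        ring

theorem tendsto_tiltedIntegral_one_sub_sin_div (hg : Continuous g) (hC : ∀ z, |g z| ≤ C) :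
    Tendsto (fun s => tiltedIntegral g (1 - sin) s / tiltedIntegral g 1 s) atTop (𝓝 0) := by
  refine tendsto_order.2 ⟨fun a ha => Eventually.of_forall fun s => ?_, fun ε hε => ?_⟩
  · exact ha.trans_le (div_nonneg (tiltedIntegral_nonneg fun z => by simp [sin_le_one])
      (tiltedIntegral_one_pos hg s).le)
  set δ := min (ε / 2) 1
  have hδ₀ : 0 < δ := lt_min (by linarith) one_pos
  have htail : Tendsto (fun s => 2 * π / δ * exp (2 * C - s * (δ / 2))) atTop (𝓝 0) := by
    have hlin : Tendsto (fun s => 2 * C - s * (δ / 2)) atTop atBot :=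
      tendsto_atBot_add_const_left _ _
        (tendsto_neg_atBot_iff.2 (tendsto_id.atTop_mul_const (by positivity)))
    simpa using (tendsto_exp_atBot.comp hlin).const_mul (2 * π / δ)
  filter_upwards [htail.eventually (gt_mem_nhds (half_pos hε)), eventually_ge_atTop 0]
    with s hsmall hs
  calc _ ≤ δ + 2 * π / δ * exp (2 * C - s * (δ / 2)) :=
        tiltedIntegral_one_sub_sin_div_le hg hC hs hδ₀ (min_le_right _ _)
    _ < ε := by linarith [min_le_left (ε / 2) 1]

end Concentration

lemma hasDerivAt_cos_mul_exp (s z : ℝ) :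
    HasDerivAt (fun z => cos z * exp (cos (2 * z) + s * sin z))
      ((s * cos z ^ 2 - sin z - 4 * sin z * cos z ^ 2) * exp (cos (2 * z) + s * sin z)) z := by
  have hphase : HasDerivAt (fun z => cos (2 * z) + s * sin z) (-sin (2 * z) * 2 + s * cos z) z :=
    (((hasDerivAt_id z).const_mul 2).cos.add ((hasDerivAt_sin z).const_mul s)).congr_deriv
      (by simp)
  refine ((hasDerivAt_cos z).mul hphase.exp).congr_deriv ?_
  rw [sin_two_mul]
  ring

lemma tiltedIntegral_cos_two_mul_identity (s : ℝ) :
    (s - 4) * tiltedIntegral (fun z => cos (2 * z)) (fun z => cos z ^ 2) s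
      - tiltedIntegral (fun z => cos (2 * z)) 1 s
      = -(tiltedIntegral (fun z => cos (2 * z)) (1 - sin) s
        + 4 * tiltedIntegral (fun z => cos (2 * z)) (fun z => (1 - sin z) * cos z ^ 2) s) := by
  have hg : Continuous fun z : ℝ => cos (2 * z) := by fun_prop
  have hperiod : tiltedIntegral (fun z => cos (2 * z))
      (fun z => s * cos z ^ 2 - sin z - 4 * sin z * cos z ^ 2) s = 0 := by
    rw [tiltedIntegral, intervalIntegral.integral_eq_sub_of_hasDerivAt
      (fun z _ => hasDerivAt_cos_mul_exp s z) (intervalIntegrable_tilted hg (by fun_prop) s)]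
    simp
  rw [show (fun z => s * cos z ^ 2 - sin z - 4 * sin z * cos z ^ 2)
      = (fun z => (s - 4) * cos z ^ 2) - 1
        + ((1 - sin) + fun z => 4 * ((1 - sin z) * cos z ^ 2)) by ext z; simp; ring,
    tiltedIntegral_add hg (by fun_prop) (by fun_prop),
    tiltedIntegral_sub (f' := 1) hg (by fun_prop) continuous_const,
    tiltedIntegral_add hg (by fun_prop) (by fun_prop),
    tiltedIntegral_const_mul, tiltedIntegral_const_mul] at hperiod
  linarith

lemma hRatio_eq_hRatio_mul_one (ρ b : ℝ) : hRatio ρ b = hRatio (ρ * b) 1 := by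
  simp only [hRatio, mul_one]

lemma hRatio_eq_div (s : ℝ) :
    hRatio s 1 = tiltedIntegral (fun z => cos (2 * z)) (fun z => cos z ^ 2) s
      / tiltedIntegral (fun z => cos (2 * z)) 1 s := by
  simp [hRatio, tiltedIntegral]

lemma abs_sub_four_mul_hRatio_sub_one_le (s : ℝ) :
    |(s - 4) * hRatio s 1 - 1|
      ≤ 5 * (tiltedIntegral (fun z => cos (2 * z)) (1 - sin) s
        / tiltedIntegral (fun z => cos (2 * z)) 1 s) := by
  have hg : Continuous fun z : ℝ => cos (2 * z) := by fun_prop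
  have hA := tiltedIntegral_one_pos hg s
  have hE₁ : 0 ≤ tiltedIntegral (fun z => cos (2 * z)) (1 - sin) s :=
    tiltedIntegral_nonneg fun z => by simp [sin_le_one]
  have hE₂ : 0 ≤ tiltedIntegral (fun z => cos (2 * z)) (fun z => (1 - sin z) * cos z ^ 2) s :=
    tiltedIntegral_nonneg fun z => mul_nonneg (by linarith [sin_le_one z]) (sq_nonneg _)
  have hE₂E₁ : tiltedIntegral (fun z => cos (2 * z)) (fun z => (1 - sin z) * cos z ^ 2) s
      ≤ tiltedIntegral (fun z => cos (2 * z)) (1 - sin) s :=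
    tiltedIntegral_mono hg (by fun_prop) (by fun_prop) fun z =>
      mul_le_of_le_one_right (by linarith [sin_le_one z]) (cos_sq_le_one z)
  rw [hRatio_eq_div, ← mul_div_assoc, div_sub_one hA.ne', tiltedIntegral_cos_two_mul_identity,
    abs_div, abs_of_pos hA, abs_neg, abs_of_nonneg (by positivity), mul_div_assoc']
  gcongr
  linarith

theorem tendsto_sub_four_mul_hRatio :
    Tendsto (fun s => (s - 4) * hRatio s 1) atTop (𝓝 1) := by
  have hC : ∀ z : ℝ, |cos (2 * z)| ≤ 1 := fun z => abs_cos_le_one _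
  rw [tendsto_iff_norm_sub_tendsto_zero]
  simp only [Real.norm_eq_abs]
  exact squeeze_zero (fun s => abs_nonneg _) abs_sub_four_mul_hRatio_sub_one_le
    (by simpa using (tendsto_tiltedIntegral_one_sub_sin_div (by fun_prop) hC).const_mul 5)

lemma tendsto_div_mul_sub {α : Type*} {l : Filter α} {ρs bs : α → ℝ} {b : ℝ}
    (hρ : Tendsto ρs l atTop) (hb : Tendsto bs l (𝓝 b)) (hb₀ : b ≠ 0) (c : ℝ) :
    Tendsto (fun n => ρs n / (ρs n * bs n - c)) l (𝓝 b⁻¹) := by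
  have hden : Tendsto (fun n => bs n - c / ρs n) l (𝓝 b) := by
    simpa using hb.sub (tendsto_const_nhds.div_atTop hρ)
  refine (hden.inv₀ hb₀).congr' ?_
  filter_upwards [hρ.eventually_gt_atTop 0] with n hn
  rw [show bs n - c / ρs n = (ρs n * bs n - c) / ρs n by field_simp, inv_div]

/-- As `ρ → ∞` with `b → 1`, `ρ h(ρ,b) → 1`; more precisely `h(ρ,b) ∼ 1/(ρ b - 4)` as
`ρ b → ∞` with `b` bounded away from `0`. -/
theorem stmt14 :
    (∀ ρs bs : ℕ → ℝ, Tendsto ρs atTop atTop → Tendsto bs atTop (nhds 1) →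
      Tendsto (fun n => ρs n * hRatio (ρs n) (bs n)) atTop (nhds 1)) ∧
    (∀ b0 : ℝ, 0 < b0 → ∀ ε : ℝ, 0 < ε → ∃ M : ℝ, ∀ ρ b : ℝ, b0 ≤ b → M ≤ ρ * b →
      |hRatio ρ b / (1 / (ρ * b - 4)) - 1| ≤ ε) := by
  constructor
  · intro ρs bs hρ hb
    have hs : Tendsto (fun n => ρs n * bs n) atTop atTop := hρ.atTop_mul_pos one_pos hb
    have hprod :=
      (tendsto_div_mul_sub hρ hb one_ne_zero 4).mul (tendsto_sub_four_mul_hRatio.comp hs)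
    rw [inv_one, one_mul] at hprod
    refine hprod.congr' ?_
    filter_upwards [hs.eventually_gt_atTop 4] with n hn
    have hne : ρs n * bs n - 4 ≠ 0 := by linarith
    rw [Function.comp_apply, hRatio_eq_hRatio_mul_one (ρs n)]
    field_simp
  · intro _ _ ε hε
    obtain ⟨M, hM⟩ := eventually_atTop.1 <|
      (tendsto_iff_norm_sub_tendsto_zero.1 tendsto_sub_four_mul_hRatio).eventually
        (ge_mem_nhds hε)
    refine ⟨M, fun ρ b _ hMs => ?_⟩
    rw [hRatio_eq_hRatio_mul_one ρ, one_div, div_inv_eq_mul, mul_comm]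
    simpa using hM _ hMs
end
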